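/- Let R be an integral domain in which 2 is invertible, and let θ₁, θ₂ ∈ R[[X,Y]] be composable power series such that the split 2-valued series F_t(X,Y) = (1 + θ₁(X,Y)t)(1 + θ₂(X,Y)t) ∈ R[[X,Y]][t] satisfies: (neutral element) F_t(X,0) = (1+Xt)², i.e. θ₁(X,0) + θ₂(X,0) = 2X and θ₁(X,0)·θ₂(X,0) = X²; (symmetry) F_t(X,Y) = F_t(Y,X), i.e. θ₁+θ₂ and θ₁·θ₂ are symmetric in X,Y; and (associativity, in split form) the identity ∏_{i,j ∈ {1,2}} (1 + θᵢ(θⱼ(X,Y), Z)t) = ∏_{i,j ∈ {1,2}} (1 + θᵢ(X, θⱼ(Y,Z))t) holds in R[[X,Y,Z]][t]. Then θ₁ = θ₂, and θ₁ is a commutative formal group law over R. -/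

import Mathlib

/-!
Neutral element and symmetry only involve the elementary symmetric functions of `θ₁, θ₂`, and
over a domain these determine the pair: `θ₁(X,0) = θ₂(X,0) = X`, and the swap `X ↔ Y` permutes
`{θ₁, θ₂}`, which yields `θᵢ(0,Y) = Y`. Associativity equates two products of linear factors in
`t`, so `θ₁(θ₂(X,Y),Z) = θ_p(X, θ_q(Y,Z))` for some `p, q`. Setting `Z = 0` gives `θ₂ = θ_p`,
setting `Y = 0` gives `θ₁ = θ_p`; hence `θ₁ = θ₂`, and the same identities are the formal group
law axioms for `θ₁`. The functoriality of the truncated substitution `msubst` is inherited from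
`MvPowerSeries.subst`, with which it agrees on composable arguments.
-/

noncomputable section

/-- The weight (total degree) of a multi-exponent. -/
def wt {τ : Type*} (d : τ →₀ ℕ) : ℕ := d.sum fun _ e => e

/-- Substitution of a family of multivariate power series (each having zero constant
coefficient) into a multivariate power series in finitely many variables.  The coefficient
of the result in multidegree `d` is computed from a sufficiently large truncation of `f`;
this agrees with the usual substitution whenever every `a i` has zero constant coefficient. -/
def msubst {R : Type*} [CommRing R] {k : ℕ} {τ : Type*}
    (a : Fin k → MvPowerSeries τ R) (f : MvPowerSeries (Fin k) R) : MvPowerSeries τ R :=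
  fun d => MvPowerSeries.coeff d
    (MvPolynomial.eval₂ (MvPowerSeries.C (σ := τ) (R := R)) a
      (MvPowerSeries.trunc R (Finsupp.equivFunOnFinite.symm fun _ => wt d + 1) f))

/-- Substitution of a multivariate power series with zero constant coefficient into a
one-variable power series. -/
def psubst {R : Type*} [CommRing R] {τ : Type*}
    (a : MvPowerSeries τ R) (f : PowerSeries R) : MvPowerSeries τ R :=
  fun d => MvPowerSeries.coeff d
    (Polynomial.eval₂ (MvPowerSeries.C (σ := τ) (R := R)) a (PowerSeries.trunc (wt d + 1) f))

/-- A (one-dimensional, commutative) formal group law over `R`: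
`F(X,0) = X`, `F(0,Y) = Y`, `F(X,Y) = F(Y,X)` and `F(F(X,Y),Z) = F(X,F(Y,Z))`. -/
structure IsFGL {R : Type*} [CommRing R] (F : MvPowerSeries (Fin 2) R) : Prop where
  zero_right : msubst ![MvPowerSeries.X 0, 0] F = (MvPowerSeries.X 0 : MvPowerSeries (Fin 2) R)
  zero_left : msubst ![0, MvPowerSeries.X 1] F = (MvPowerSeries.X 1 : MvPowerSeries (Fin 2) R)
  comm : msubst ![MvPowerSeries.X 1, MvPowerSeries.X 0] F = F
  assoc : msubst ![msubst ![(MvPowerSeries.X 0 : MvPowerSeries (Fin 3) R), MvPowerSeries.X 1] F,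
        MvPowerSeries.X 2] F
      = msubst ![(MvPowerSeries.X 0 : MvPowerSeries (Fin 3) R),
        msubst ![MvPowerSeries.X 1, MvPowerSeries.X 2] F] F

/-- `ι` is the formal inverse of the formal group law `F`: it is composable and
`F(X, ι(X)) = 0` in `R[[X]]`. -/
def IsFormalInverse {R : Type*} [CommRing R] (F : MvPowerSeries (Fin 2) R)
    (ι : PowerSeries R) : Prop :=
  PowerSeries.constantCoeff (R := R) ι = 0 ∧
    msubst ![(PowerSeries.X : PowerSeries R), ι] F = 0

end


section Vieta

variable {S : Type*} [CommRing S] [NoZeroDivisors S]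

theorem eq_and_eq_of_add_eq_two_mul_of_mul_eq_sq {a b x : S} (hsum : a + b = 2 * x)
    (hprod : a * b = x ^ 2) : a = x ∧ b = x := by
  have ha : (a - x) ^ 2 = 0 := by linear_combination a * hsum - hprod
  have ha : a = x := sub_eq_zero.1 (pow_eq_zero_iff two_ne_zero |>.1 ha)
  exact ⟨ha, by linear_combination hsum - ha⟩

theorem eq_and_eq_or_eq_and_eq_of_add_eq_of_mul_eq {a b c d : S} (hsum : a + b = c + d)
    (hprod : a * b = c * d) : (a = c ∧ b = d) ∨ (a = d ∧ b = c) := by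
  have h : (a - c) * (a - d) = 0 := by linear_combination a * hsum - hprod
  rcases mul_eq_zero.1 h with h | h
  · exact .inl ⟨sub_eq_zero.1 h, by linear_combination hsum - h⟩
  · exact .inr ⟨sub_eq_zero.1 h, by linear_combination hsum - h⟩

end Vieta

section LinearFactors

open Polynomial

variable {S : Type*} [CommRing S] {ι : Type*}

theorem reflect_prod_one_add_C_mul_X (s : Finset ι) (a : ι → S) :
    reflect s.card (∏ i ∈ s, (1 + C (a i) * X)) = ∏ i ∈ s, (X + C (a i)) := by
  classical
  induction s using Finset.cons_induction with
  | empty => simp [reflect_one]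
  | cons j s hj ih =>
    have hdeg : ∀ i, (1 + C (a i) * X).natDegree ≤ 1 := fun i =>
      by rw [add_comm, ← C_1]; exact natDegree_linear_le
    have hdeg_prod : (∏ i ∈ s, (1 + C (a i) * X)).natDegree ≤ s.card :=
      (natDegree_prod_le _ _).trans
        (by simpa using Finset.sum_le_card_nsmul s _ 1 fun i _ => hdeg i)
    rw [Finset.prod_cons, Finset.prod_cons, Finset.card_cons, add_comm,
      reflect_mul _ _ (hdeg j) hdeg_prod, ih]
    simp [reflect_add, reflect_one, reflect_C_mul]

theorem exists_eq_of_prod_one_add_C_mul_X_eq [NoZeroDivisors S] [Nontrivial S] {s : Finset ι}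
    {a b : ι → S} (h : ∏ i ∈ s, (1 + C (a i) * X) = ∏ i ∈ s, (1 + C (b i) * X)) {i : ι}
    (hi : i ∈ s) :
    ∃ j ∈ s, b j = a i := by
  -- Reflection turns the factors `1 + a t` into `t + a`, which vanish at `t = -a`.
  have h := congrArg (fun p => eval (-a i) (reflect s.card p)) h
  simp only [reflect_prod_one_add_C_mul_X, eval_prod, eval_add, eval_X, eval_C] at h
  rw [Finset.prod_eq_zero hi (neg_add_cancel _), eq_comm, Finset.prod_eq_zero_iff] at h
  obtain ⟨j, hj, hj0⟩ := h
  exact ⟨j, hj, by linear_combination hj0⟩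

end LinearFactors

section Substitution

open MvPowerSeries

variable {R : Type*} [CommRing R] {k m : ℕ} [NeZero k] {τ : Type*}

theorem msubst_eq_subst {a : Fin k → MvPowerSeries τ R} (ha : ∀ i, constantCoeff (a i) = 0)
    (f : MvPowerSeries (Fin k) R) : msubst a f = subst a f := by
  ext d
  -- `msubst` drops the terms of `f` outside the box `e < n`, all of total degree `> deg d`;
  -- substituting series without constant term cannot bring them down to degree `deg d`.
  set n : Fin k →₀ ℕ := Finsupp.equivFunOnFinite.symm fun _ => d.degree + 1
  set p : MvPowerSeries (Fin k) R := (trunc R n f : MvPowerSeries (Fin k) R)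
  have hsubst := hasSubst_of_constantCoeff_zero ha
  have hp : coeff d (msubst a f) = coeff d (subst a p) := by
    rw [subst_coe, coeff_apply]
    rfl
  have hfp : (d.degree + 1 : ℕ∞) ≤ (f - p).order := by
    refine le_order fun e he => ?_
    have he : e.degree ≤ d.degree := Nat.lt_succ_iff.1 (by exact_mod_cast he)
    have hlt : ∀ i, e i < n i := fun i => by simpa [n] using (e.le_degree i).trans he
    have hen : e < n :=
      lt_of_le_of_ne (fun i => (hlt i).le) fun h => (hlt 0).ne (h ▸ rfl)
    rw [map_sub, MvPolynomial.coeff_coe, coeff_trunc, if_pos hen, sub_self]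
  have hrest : coeff d (subst a (f - p)) = 0 := by
    refine coeff_of_lt_order (lt_of_lt_of_le ?_ (le_order_subst hsubst _))
    have hone : 1 ≤ ⨅ i, (a i).order :=
      le_iInf fun i => one_le_order_iff_constCoeff_eq_zero.2 (ha i)
    exact (by exact_mod_cast d.degree.lt_succ_self : (d.degree : ℕ∞) < d.degree + 1).trans_le
      (hfp.trans (le_mul_of_one_le_left' hone))
  rw [hp, eq_comm, ← sub_eq_zero, ← map_sub, ← subst_sub hsubst, hrest]

theorem msubst_X_X (f : MvPowerSeries (Fin 2) R) :
    msubst ![X 0, X 1] f = f := by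
  have hX : ![X 0, X 1] = (X : Fin 2 → MvPowerSeries (Fin 2) R) := by
    ext i : 1
    fin_cases i <;> rfl
  rw [msubst_eq_subst (by simp [Fin.forall_fin_two]), hX, subst_self, id]

variable {a : Fin k → MvPowerSeries τ R} (ha : ∀ i, constantCoeff (a i) = 0)
include ha

theorem msubst_X (i : Fin k) : msubst a (X i) = a i := by
  rw [msubst_eq_subst ha, subst_X (hasSubst_of_constantCoeff_zero ha)]

theorem msubst_zero : msubst a (0 : MvPowerSeries (Fin k) R) = 0 := by
  rw [msubst_eq_subst ha, ← coe_substAlgHom (hasSubst_of_constantCoeff_zero ha), map_zero]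

theorem constantCoeff_msubst {f : MvPowerSeries (Fin k) R} (hf : constantCoeff f = 0) :
    constantCoeff (msubst a f) = 0 := by
  rw [msubst_eq_subst ha, constantCoeff_subst_eq_zero (hasSubst_of_constantCoeff_zero ha) ha hf]

theorem msubst_msubst [NeZero m] {b : Fin m → MvPowerSeries (Fin k) R}
    (hb : ∀ i, constantCoeff (b i) = 0) (f : MvPowerSeries (Fin m) R) :
    msubst a (msubst b f) = msubst (fun i => msubst a (b i)) f := by
  rw [msubst_eq_subst hb, msubst_eq_subst ha,
    msubst_eq_subst fun i => constantCoeff_msubst ha (hb i),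
    subst_comp_subst_apply (hasSubst_of_constantCoeff_zero hb) (hasSubst_of_constantCoeff_zero ha)]
  simp only [msubst_eq_subst ha]

theorem msubst_pair_msubst {p q : MvPowerSeries (Fin k) R} (hp : constantCoeff p = 0)
    (hq : constantCoeff q = 0) (f : MvPowerSeries (Fin 2) R) :
    msubst a (msubst ![p, q] f) = msubst ![msubst a p, msubst a q] f := by
  rw [msubst_msubst ha (Fin.forall_fin_two.2 ⟨hp, hq⟩)]
  congr 1
  ext i : 1
  fin_cases i <;> rfl

end Substitution

section FormalGroup

open MvPowerSeries

variable {R : Type*} [CommRing R] {τ : Type*}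

theorem msubst_pair_zero_of_msubst_X_zero {f : MvPowerSeries (Fin 2) R}
    (hf : msubst ![X 0, 0] f = (X 0 : MvPowerSeries (Fin 2) R)) {g : MvPowerSeries τ R}
    (hg : constantCoeff g = 0) : msubst ![g, 0] f = g := by
  have hgg : ∀ i, constantCoeff (![g, g] i) = 0 := Fin.forall_fin_two.2 ⟨hg, hg⟩
  have h := congrArg (msubst ![g, g]) hf
  rwa [msubst_pair_msubst hgg (constantCoeff_X 0) (map_zero _), msubst_X hgg,
    msubst_zero hgg] at h

theorem msubst_zero_X_of_swap {f g : MvPowerSeries (Fin 2) R}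
    (hswap : msubst ![X 1, X 0] g = f)
    (hg : msubst ![X 0, 0] g = (X 0 : MvPowerSeries (Fin 2) R)) :
    msubst ![0, X 1] f = (X 1 : MvPowerSeries (Fin 2) R) := by
  have hc : ∀ i, constantCoeff (![0, X 1] i : MvPowerSeries (Fin 2) R) = 0 := by
    simp [Fin.forall_fin_two]
  rw [← hswap, msubst_pair_msubst hc (constantCoeff_X 1) (constantCoeff_X 0)]
  simp only [msubst_X hc, Matrix.cons_val_zero, Matrix.cons_val_one]
  exact msubst_pair_zero_of_msubst_X_zero hg (constantCoeff_X 1)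

end FormalGroup

section Associativity

open MvPowerSeries

variable {R : Type*} [CommRing R] {f g h k : MvPowerSeries (Fin 2) R}

theorem msubst_left_assoc_Z_zero (hf : msubst ![X 0, 0] f = (X 0 : MvPowerSeries (Fin 2) R))
    (hg : constantCoeff g = 0) :
    msubst ![X 0, X 1, 0] (msubst ![msubst ![(X 0 : MvPowerSeries (Fin 3) R), X 1] g, X 2] f)
      = g := by
  have hc : ∀ i, constantCoeff (![X 0, X 1, 0] i : MvPowerSeries (Fin 2) R) = 0 := by
    simp [Fin.forall_fin_succ]
  rw [msubst_pair_msubst hc (constantCoeff_msubst (by simp [Fin.forall_fin_two]) hg)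
    (constantCoeff_X 2), msubst_pair_msubst hc (constantCoeff_X 0) (constantCoeff_X 1)]
  simp only [msubst_X hc, Matrix.cons_val_zero, Matrix.cons_val_one, Matrix.cons_val_two,
    Matrix.tail_cons, Matrix.head_cons, msubst_X_X]
  exact msubst_pair_zero_of_msubst_X_zero hf hg

theorem msubst_right_assoc_Z_zero (hk : msubst ![X 0, 0] k = (X 0 : MvPowerSeries (Fin 2) R))
    (hk₀ : constantCoeff k = 0) :
    msubst ![X 0, X 1, 0] (msubst ![(X 0 : MvPowerSeries (Fin 3) R), msubst ![X 1, X 2] k] h)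
      = h := by
  have hc : ∀ i, constantCoeff (![X 0, X 1, 0] i : MvPowerSeries (Fin 2) R) = 0 := by
    simp [Fin.forall_fin_succ]
  rw [msubst_pair_msubst hc (constantCoeff_X 0)
    (constantCoeff_msubst (by simp [Fin.forall_fin_two]) hk₀),
    msubst_pair_msubst hc (constantCoeff_X 1) (constantCoeff_X 2)]
  simp only [msubst_X hc, Matrix.cons_val_zero, Matrix.cons_val_one, Matrix.cons_val_two,
    Matrix.tail_cons, Matrix.head_cons]
  rw [msubst_pair_zero_of_msubst_X_zero hk (constantCoeff_X 1), msubst_X_X]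

theorem msubst_left_assoc_Y_zero (hg : msubst ![X 0, 0] g = (X 0 : MvPowerSeries (Fin 2) R))
    (hg₀ : constantCoeff g = 0) :
    msubst ![X 0, 0, X 1] (msubst ![msubst ![(X 0 : MvPowerSeries (Fin 3) R), X 1] g, X 2] f)
      = f := by
  have hc : ∀ i, constantCoeff (![X 0, 0, X 1] i : MvPowerSeries (Fin 2) R) = 0 := by
    simp [Fin.forall_fin_succ]
  rw [msubst_pair_msubst hc (constantCoeff_msubst (by simp [Fin.forall_fin_two]) hg₀)
    (constantCoeff_X 2), msubst_pair_msubst hc (constantCoeff_X 0) (constantCoeff_X 1)]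
  simp only [msubst_X hc, Matrix.cons_val_zero, Matrix.cons_val_one, Matrix.cons_val_two,
    Matrix.tail_cons, Matrix.head_cons, hg, msubst_X_X]

theorem msubst_right_assoc_Y_zero (hk : msubst ![0, X 1] k = (X 1 : MvPowerSeries (Fin 2) R))
    (hk₀ : constantCoeff k = 0) :
    msubst ![X 0, 0, X 1] (msubst ![(X 0 : MvPowerSeries (Fin 3) R), msubst ![X 1, X 2] k] h)
      = h := by
  have hc : ∀ i, constantCoeff (![X 0, 0, X 1] i : MvPowerSeries (Fin 2) R) = 0 := by
    simp [Fin.forall_fin_succ]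
  rw [msubst_pair_msubst hc (constantCoeff_X 0)
    (constantCoeff_msubst (by simp [Fin.forall_fin_two]) hk₀),
    msubst_pair_msubst hc (constantCoeff_X 1) (constantCoeff_X 2)]
  simp only [msubst_X hc, Matrix.cons_val_zero, Matrix.cons_val_one, Matrix.cons_val_two,
    Matrix.tail_cons, Matrix.head_cons, hk, msubst_X_X]

theorem eq_of_msubst_assoc (hf : msubst ![X 0, 0] f = (X 0 : MvPowerSeries (Fin 2) R))
    (hg : msubst ![X 0, 0] g = (X 0 : MvPowerSeries (Fin 2) R)) (hg₀ : constantCoeff g = 0)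
    (hk : msubst ![X 0, 0] k = (X 0 : MvPowerSeries (Fin 2) R))
    (hk' : msubst ![0, X 1] k = (X 1 : MvPowerSeries (Fin 2) R)) (hk₀ : constantCoeff k = 0)
    (hassoc : msubst ![msubst ![(X 0 : MvPowerSeries (Fin 3) R), X 1] g, X 2] f
      = msubst ![(X 0 : MvPowerSeries (Fin 3) R), msubst ![X 1, X 2] k] h) :
    f = h ∧ g = h := by
  constructor
  · have hY := congrArg (msubst (![X 0, 0, X 1] : Fin 3 → MvPowerSeries (Fin 2) R)) hassoc
    rwa [msubst_left_assoc_Y_zero hg hg₀, msubst_right_assoc_Y_zero hk' hk₀] at hY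
  · have hZ := congrArg (msubst (![X 0, X 1, 0] : Fin 3 → MvPowerSeries (Fin 2) R)) hassoc
    rwa [msubst_left_assoc_Z_zero hf hg₀, msubst_right_assoc_Z_zero hk hk₀] at hZ

end Associativity

open MvPowerSeries in
theorem stmt_16_general {R : Type*} [CommRing R] [IsDomain R]
    (θ₁ θ₂ : MvPowerSeries (Fin 2) R)
    (hc₁ : MvPowerSeries.constantCoeff (σ := Fin 2) (R := R) θ₁ = 0)
    (hc₂ : MvPowerSeries.constantCoeff (σ := Fin 2) (R := R) θ₂ = 0)
    (hneut_sum : msubst ![MvPowerSeries.X 0, 0] θ₁ + msubst ![MvPowerSeries.X 0, 0] θ₂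
        = 2 * (MvPowerSeries.X 0 : MvPowerSeries (Fin 2) R))
    (hneut_prod : msubst ![MvPowerSeries.X 0, 0] θ₁ * msubst ![MvPowerSeries.X 0, 0] θ₂
        = (MvPowerSeries.X 0 : MvPowerSeries (Fin 2) R) ^ 2)
    (hsym_sum : msubst ![MvPowerSeries.X 1, MvPowerSeries.X 0] θ₁
        + msubst ![MvPowerSeries.X 1, MvPowerSeries.X 0] θ₂ = θ₁ + θ₂)
    (hsym_prod : msubst ![MvPowerSeries.X 1, MvPowerSeries.X 0] θ₁
        * msubst ![MvPowerSeries.X 1, MvPowerSeries.X 0] θ₂ = θ₁ * θ₂)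
    (hassoc : (∏ ij : Fin 2 × Fin 2,
        (1 + Polynomial.C (msubst ![msubst ![(MvPowerSeries.X 0 : MvPowerSeries (Fin 3) R),
            MvPowerSeries.X 1] (![θ₁, θ₂] ij.2), MvPowerSeries.X 2] (![θ₁, θ₂] ij.1))
          * Polynomial.X))
      = ∏ ij : Fin 2 × Fin 2,
        (1 + Polynomial.C (msubst ![(MvPowerSeries.X 0 : MvPowerSeries (Fin 3) R),
            msubst ![MvPowerSeries.X 1, MvPowerSeries.X 2] (![θ₁, θ₂] ij.2)] (![θ₁, θ₂] ij.1))
          * Polynomial.X)) :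
    θ₁ = θ₂ ∧ IsFGL θ₁ := by
  obtain ⟨hr₁, hr₂⟩ := eq_and_eq_of_add_eq_two_mul_of_mul_eq_sq hneut_sum hneut_prod
  have hswap := eq_and_eq_or_eq_and_eq_of_add_eq_of_mul_eq hsym_sum hsym_prod
  have hl : msubst ![0, X 1] θ₁ = (X 1 : MvPowerSeries (Fin 2) R) ∧
      msubst ![0, X 1] θ₂ = (X 1 : MvPowerSeries (Fin 2) R) := by
    rcases hswap with ⟨h₁, h₂⟩ | ⟨h₁, h₂⟩
    · exact ⟨msubst_zero_X_of_swap h₁ hr₁, msubst_zero_X_of_swap h₂ hr₂⟩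
    · exact ⟨msubst_zero_X_of_swap h₂ hr₂, msubst_zero_X_of_swap h₁ hr₁⟩
  -- the factor indexed by `(0, 1)` is `1 + θ₁(θ₂(X,Y),Z) t`
  obtain ⟨⟨p, q⟩, -, hpq⟩ := exists_eq_of_prod_one_add_C_mul_X_eq hassoc (Finset.mem_univ (0, 1))
  have hq : msubst ![X 0, 0] (![θ₁, θ₂] q) = (X 0 : MvPowerSeries (Fin 2) R) ∧
      msubst ![0, X 1] (![θ₁, θ₂] q) = (X 1 : MvPowerSeries (Fin 2) R) ∧
      constantCoeff (![θ₁, θ₂] q) = 0 := by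
    fin_cases q
    exacts [⟨hr₁, hl.1, hc₁⟩, ⟨hr₂, hl.2, hc₂⟩]
  obtain ⟨h₁, h₂⟩ := eq_of_msubst_assoc hr₁ hr₂ hc₂ hq.1 hq.2.1 hq.2.2 hpq.symm
  obtain rfl : θ₁ = θ₂ := h₁.trans h₂.symm
  refine ⟨rfl, hr₁, hl.1, ?_, ?_⟩
  · rcases hswap with ⟨h, -⟩ | ⟨h, -⟩ <;> exact h
  · have hconst : ∀ i, ![θ₁, θ₁] i = θ₁ := Fin.forall_fin_two.2 ⟨rfl, rfl⟩
    simpa only [hconst] using hpq.symm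

/-- Over an integral domain `R` with `2` invertible, if composable
`θ₁, θ₂ ∈ R[[X,Y]]` are the roots of a split 2-valued series
`F_t = (1 + θ₁t)(1 + θ₂t)` satisfying the neutral element axiom `F_t(X,0) = (1+Xt)²`,
the symmetry axiom, and the associativity axiom in split form, then `θ₁ = θ₂` and `θ₁`
is a (commutative) formal group law over `R`. -/
theorem stmt_16 {R : Type*} [CommRing R] [IsDomain R] (h2 : IsUnit (2 : R))
    (θ₁ θ₂ : MvPowerSeries (Fin 2) R)
    (hc₁ : MvPowerSeries.constantCoeff (σ := Fin 2) (R := R) θ₁ = 0)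
    (hc₂ : MvPowerSeries.constantCoeff (σ := Fin 2) (R := R) θ₂ = 0)
    (hneut_sum : msubst ![MvPowerSeries.X 0, 0] θ₁ + msubst ![MvPowerSeries.X 0, 0] θ₂
        = 2 * (MvPowerSeries.X 0 : MvPowerSeries (Fin 2) R))
    (hneut_prod : msubst ![MvPowerSeries.X 0, 0] θ₁ * msubst ![MvPowerSeries.X 0, 0] θ₂
        = (MvPowerSeries.X 0 : MvPowerSeries (Fin 2) R) ^ 2)
    (hsym_sum : msubst ![MvPowerSeries.X 1, MvPowerSeries.X 0] θ₁
        + msubst ![MvPowerSeries.X 1, MvPowerSeries.X 0] θ₂ = θ₁ + θ₂)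
    (hsym_prod : msubst ![MvPowerSeries.X 1, MvPowerSeries.X 0] θ₁
        * msubst ![MvPowerSeries.X 1, MvPowerSeries.X 0] θ₂ = θ₁ * θ₂)
    (hassoc : (∏ ij : Fin 2 × Fin 2,
        (1 + Polynomial.C (msubst ![msubst ![(MvPowerSeries.X 0 : MvPowerSeries (Fin 3) R),
            MvPowerSeries.X 1] (![θ₁, θ₂] ij.2), MvPowerSeries.X 2] (![θ₁, θ₂] ij.1))
          * Polynomial.X))
      = ∏ ij : Fin 2 × Fin 2,
        (1 + Polynomial.C (msubst ![(MvPowerSeries.X 0 : MvPowerSeries (Fin 3) R),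
            msubst ![MvPowerSeries.X 1, MvPowerSeries.X 2] (![θ₁, θ₂] ij.2)] (![θ₁, θ₂] ij.1))
          * Polynomial.X)) :
    θ₁ = θ₂ ∧ IsFGL θ₁ :=
  stmt_16_general θ₁ θ₂ hc₁ hc₂ hneut_sum hneut_prod hsym_sum hsym_prod hassoc
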